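/- Let k ≥ 0 and let y be an integer with 2^k ≤ y < 2^{k+1}. Then culam[y] is biperiodic with biperiod 2^{k+1}×2^{k+1}. -/

import Mathlib

/-- Fuel-indexed Ulam predicate: a binary word (as a `List Bool`) of length 1 is Ulam,
and a longer word is Ulam iff it is expressible *uniquely* as a concatenation of two
distinct (nonempty) Ulam words. The fuel strictly exceeds the lengths needed. -/
def ulamAux : ℕ → List Bool → Prop
  | 0, _ => False
  | n + 1, w =>
    if w.length = 1 then True
    else ∃! p : List Bool × List Bool,
      p.1 ≠ [] ∧ p.2 ≠ [] ∧ p.1 ≠ p.2 ∧ w = p.1 ++ p.2 ∧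
        ulamAux n p.1 ∧ ulamAux n p.2

/-- A binary word is an Ulam word. -/
def IsUlam (w : List Bool) : Prop := ulamAux w.length w

/-- The word `0^x 1 0^y`. -/
def wordTwo (x y : ℕ) : List Bool :=
  List.replicate x false ++ [true] ++ List.replicate y false

/-- The word `0^x 1 0^y 1 0^z`. -/
def wordThree (x y z : ℕ) : List Bool :=
  List.replicate x false ++ [true] ++ List.replicate y false ++ [true] ++
    List.replicate z false

/-- `UlamSet y` is the set of pairs `(x,z)` such that `0^x 1 0^y 1 0^z` is Ulam. -/
def UlamSet (y : ℕ) : Set (ℕ × ℕ) := {p | IsUlam (wordThree p.1 y p.2)}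

/-- `culam y x z = min(2, N)` where `N` counts `0 ≤ a ≤ y` with both
`w(x,a)` and `w(y-a,z)` Ulam. -/
noncomputable def culam (y x z : ℕ) : ℕ :=
  min 2 {a : ℕ | a ≤ y ∧ IsUlam (wordTwo x a) ∧ IsUlam (wordTwo (y - a) z)}.ncard

/-- A positive integer is Zumkeller if its binary representation has at most one `0`. -/
def IsZumkeller (y : ℕ) : Prop := 0 < y ∧ (Nat.bits y).count false ≤ 1

/-- The largest `e ≤ d - 1` with `x mod 2^(e+1) < 2^e` and `z mod 2^(e+1) < 2^e`
(and `0` if none exists). -/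
def eIdx (d x z : ℕ) : ℕ :=
  Nat.findGreatest (fun e => x % 2 ^ (e + 1) < 2 ^ e ∧ z % 2 ^ (e + 1) < 2 ^ e) (d - 1)

/-- The universal pattern `E1[d]` on `B_d`. -/
def E1 (d x z : ℕ) : ℕ :=
  if 2 ^ d - 1 ≤ x + z then 0
  else if x % 2 ^ eIdx d x z + z % 2 ^ eIdx d x z < 2 ^ eIdx d x z - 1 then 2 else 1

/-- The universal pattern `E2[d]` on `B_d` (constant `1`). -/
def E2 (_d _x _z : ℕ) : ℕ := 1

/-- The universal pattern `O1[d]` on `B_d`. -/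
def O1 (d x z : ℕ) : ℕ :=
  if 2 ^ d - 2 ≤ x + z then 0
  else if (x + z) % 2 = 0 then (if x % 2 = 1 then 0 else 2)
  else if x % 2 ^ eIdx d x z + z % 2 ^ eIdx d x z < 2 ^ eIdx d x z - 1 then 2 else 1

/-- The universal pattern `O2[d]` on `B_d` (independent of `d`). -/
def O2 (_d x z : ℕ) : ℕ :=
  if (x + z) % 2 = 0 then (if x % 2 = 1 then 0 else 2) else 1

section UlamAux

lemma ulamAux_congr : ∀ (n m : ℕ) (w : List Bool), w ≠ [] → w.length ≤ n → w.length ≤ m →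
    (ulamAux n w ↔ ulamAux m w) := by
  intro n
  induction n with
  | zero =>
    intro m w hw hn _
    have := List.length_pos_iff.mpr hw
    omega
  | succ n ih =>
    intro m w hw hn hm
    have hw1 : 1 ≤ w.length := List.length_pos_iff.mpr hw
    obtain ⟨m', rfl⟩ : ∃ m', m = m' + 1 := ⟨m - 1, by omega⟩
    simp only [ulamAux]
    by_cases hl : w.length = 1
    · simp [hl]
    · simp only [hl, if_false]
      apply existsUnique_congr
      intro p
      have key : p.1 ≠ [] → p.2 ≠ [] → w = p.1 ++ p.2 →
          ((ulamAux n p.1 ↔ ulamAux m' p.1) ∧ (ulamAux n p.2 ↔ ulamAux m' p.2)) := by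
        intro h1 h2 h4
        have l1 : 1 ≤ p.1.length := List.length_pos_iff.mpr h1
        have l2 : 1 ≤ p.2.length := List.length_pos_iff.mpr h2
        have hlen : w.length = p.1.length + p.2.length := by rw [h4]; simp
        exact ⟨ih m' p.1 h1 (by omega) (by omega), ih m' p.2 h2 (by omega) (by omega)⟩
      constructor
      · rintro ⟨h1, h2, h3, h4, h5, h6⟩
        exact ⟨h1, h2, h3, h4, (key h1 h2 h4).1.mp h5, (key h1 h2 h4).2.mp h6⟩
      · rintro ⟨h1, h2, h3, h4, h5, h6⟩
        exact ⟨h1, h2, h3, h4, (key h1 h2 h4).1.mpr h5, (key h1 h2 h4).2.mpr h6⟩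

lemma isUlam_of_length_one {w : List Bool} (h : w.length = 1) : IsUlam w := by
  simp [IsUlam, h, ulamAux]

lemma not_isUlam_nil : ¬ IsUlam ([] : List Bool) := by
  simp [IsUlam, ulamAux]

lemma ulamAux_iff_isUlam {n : ℕ} {w : List Bool} (hw : w ≠ []) (hn : w.length ≤ n) :
    (ulamAux n w ↔ IsUlam w) :=
  ulamAux_congr n w.length w hw hn le_rfl

lemma isUlam_unfold {w : List Bool} (hw : 2 ≤ w.length) :
    IsUlam w ↔ ∃! p : List Bool × List Bool, p.1 ≠ [] ∧ p.2 ≠ [] ∧ p.1 ≠ p.2 ∧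
      w = p.1 ++ p.2 ∧ IsUlam p.1 ∧ IsUlam p.2 := by
  have hw0 : w ≠ [] := by intro h; rw [h] at hw; simp at hw
  obtain ⟨l, hl⟩ : ∃ l, w.length = l + 1 := ⟨w.length - 1, by omega⟩
  unfold IsUlam
  rw [hl]
  simp only [ulamAux]
  rw [if_neg (by omega)]
  apply existsUnique_congr
  intro p
  have key : p.1 ≠ [] → p.2 ≠ [] → w = p.1 ++ p.2 →
      ((ulamAux l p.1 ↔ IsUlam p.1) ∧ (ulamAux l p.2 ↔ IsUlam p.2)) := by
    intro h1 h2 h4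
    have l1 : 1 ≤ p.1.length := List.length_pos_iff.mpr h1
    have l2 : 1 ≤ p.2.length := List.length_pos_iff.mpr h2
    have hlen : w.length = p.1.length + p.2.length := by rw [h4]; simp
    exact ⟨ulamAux_iff_isUlam h1 (by omega), ulamAux_iff_isUlam h2 (by omega)⟩
  constructor
  · rintro ⟨h1, h2, h3, h4, h5, h6⟩
    exact ⟨h1, h2, h3, h4, (key h1 h2 h4).1.mp h5, (key h1 h2 h4).2.mp h6⟩
  · rintro ⟨h1, h2, h3, h4, h5, h6⟩
    exact ⟨h1, h2, h3, h4, (key h1 h2 h4).1.mpr h5, (key h1 h2 h4).2.mpr h6⟩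

lemma isUlam_replicate (a : ℕ) : IsUlam (List.replicate a false) ↔ a = 1 := by
  induction a using Nat.strong_induction_on with
  | _ a ih =>
    match a with
    | 0 => simpa using not_isUlam_nil
    | 1 => simpa using isUlam_of_length_one (w := [false]) rfl
    | (a + 2) =>
      rw [isUlam_unfold (by simp)]
      constructor
      · rintro ⟨p, ⟨h1, h2, h3, h4, h5, h6⟩, _⟩
        exfalso
        have l1 : 1 ≤ p.1.length := List.length_pos_iff.mpr h1
        have l2 : 1 ≤ p.2.length := List.length_pos_iff.mpr h2
        have hlen : p.1.length + p.2.length = a + 2 := by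
          have := congrArg List.length h4
          simp at this
          omega
        have e1 : p.1 = List.replicate p.1.length false := by
          conv_lhs => rw [← List.take_left (l₁ := p.1) (l₂ := p.2), ← h4]
          rw [List.take_replicate, min_eq_left (by omega : p.1.length ≤ a + 2)]
        have e2 : p.2 = List.replicate (a + 2 - p.1.length) false := by
          rw [← List.drop_left (l₁ := p.1) (l₂ := p.2), ← h4, List.drop_replicate]
        rw [e1] at h5
        rw [e2] at h6
        have f1 : p.1.length = 1 := (ih p.1.length (by omega)).mp h5
        have f2 : a + 2 - p.1.length = 1 := (ih _ (by omega)).mp h6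
        apply h3
        rw [e1, e2, f2, f1]
      · omega

lemma wordTwo_eq (x y : ℕ) :
    wordTwo x y = List.replicate x false ++ true :: List.replicate y false := by
  simp [wordTwo]

lemma wordTwo_length (x y : ℕ) : (wordTwo x y).length = x + y + 1 := by
  simp [wordTwo]
  omega

lemma wordTwo_ne_nil (x y : ℕ) : wordTwo x y ≠ [] := by
  intro h
  have := congrArg List.length h
  rw [wordTwo_length] at this
  simp at this

lemma wordTwo_ne_replicate (x y a : ℕ) : wordTwo x y ≠ List.replicate a false := by
  intro h
  have hm : true ∈ wordTwo x y := by simp [wordTwo]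
  rw [h] at hm
  simpa using List.eq_of_mem_replicate hm

lemma wordTwo_ne_singleton (x y : ℕ) : wordTwo x y ≠ [false] := by
  have := wordTwo_ne_replicate x y 1
  simpa using this

lemma wordTwo_decomp {x y : ℕ} {u v : List Bool} (hu : u ≠ []) (hv : v ≠ [])
    (h : wordTwo x y = u ++ v) :
    (∃ i, 1 ≤ i ∧ i ≤ x ∧ u = List.replicate i false ∧ v = wordTwo (x - i) y) ∨
      (∃ j, j < y ∧ u = wordTwo x j ∧ v = List.replicate (y - j) false) := by
  set i := u.length with hi
  have hu' : u = (wordTwo x y).take i := by rw [h, List.take_left]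
  have hv' : v = (wordTwo x y).drop i := by rw [h, List.drop_left]
  have h1 : 1 ≤ i := List.length_pos_iff.mpr hu
  have hvl : 1 ≤ v.length := List.length_pos_iff.mpr hv
  have hiv : i + v.length = x + y + 1 := by
    have := wordTwo_length x y
    rw [h] at this
    simp at this
    omega
  by_cases hix : i ≤ x
  · left
    refine ⟨i, h1, hix, ?_, ?_⟩
    · rw [hu', wordTwo_eq, List.take_append_of_le_length (by simpa using hix),
        List.take_replicate]
      congr 1
      omega
    · rw [hv', wordTwo_eq, List.drop_append_of_le_length (by simpa using hix),
        List.drop_replicate, wordTwo_eq]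
  · right
    push_neg at hix
    obtain ⟨j, hj⟩ : ∃ j, i = x + (j + 1) := ⟨i - x - 1, by omega⟩
    have hjy : j < y := by omega
    refine ⟨j, hjy, ?_, ?_⟩
    · rw [hu', wordTwo_eq, hj]
      have ht := List.take_length_add_append (l₁ := List.replicate x false)
        (l₂ := true :: List.replicate y false) (j + 1)
      simp only [List.length_replicate] at ht
      rw [ht, List.take_succ_cons, List.take_replicate, min_eq_left (by omega), wordTwo_eq]
    · rw [hv', wordTwo_eq, hj]
      have hd := List.drop_length_add_append (l₁ := List.replicate x false)
        (l₂ := true :: List.replicate y false) (j + 1)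
      simp only [List.length_replicate] at hd
      rw [hd, List.drop_succ_cons, List.drop_replicate]

/-- The decomposition predicate for `wordTwo x y`. -/
def Pred (x y : ℕ) (p : List Bool × List Bool) : Prop :=
  p.1 ≠ [] ∧ p.2 ≠ [] ∧ p.1 ≠ p.2 ∧ wordTwo x y = p.1 ++ p.2 ∧ IsUlam p.1 ∧ IsUlam p.2

lemma isUlam_wordTwo_iff (x y : ℕ) (h : 1 ≤ x + y) :
    IsUlam (wordTwo x y) ↔ ∃! p : List Bool × List Bool, Pred x y p := by
  rw [isUlam_unfold (by rw [wordTwo_length]; omega)]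
  exact Iff.rfl

lemma predA (x y : ℕ) (hx : 1 ≤ x) (hU : IsUlam (wordTwo (x - 1) y)) :
    Pred x y ([false], wordTwo (x - 1) y) := by
  refine ⟨by simp, wordTwo_ne_nil _ _, ?_, ?_, isUlam_of_length_one rfl, hU⟩
  · exact (wordTwo_ne_singleton (x - 1) y).symm
  · obtain ⟨x', rfl⟩ : ∃ x', x = x' + 1 := ⟨x - 1, by omega⟩
    simp [wordTwo_eq, List.replicate_succ]

lemma predB (x y : ℕ) (hy : 1 ≤ y) (hU : IsUlam (wordTwo x (y - 1))) :
    Pred x y (wordTwo x (y - 1), [false]) := by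
  refine ⟨wordTwo_ne_nil _ _, by simp, ?_, ?_, hU, isUlam_of_length_one rfl⟩
  · exact wordTwo_ne_singleton x (y - 1)
  · obtain ⟨y', rfl⟩ : ∃ y', y = y' + 1 := ⟨y - 1, by omega⟩
    simp [wordTwo_eq, List.replicate_succ']

lemma pred_classify {x y : ℕ} {p : List Bool × List Bool} (hp : Pred x y p) :
    (1 ≤ x ∧ IsUlam (wordTwo (x - 1) y) ∧ p = ([false], wordTwo (x - 1) y)) ∨
      (1 ≤ y ∧ IsUlam (wordTwo x (y - 1)) ∧ p = (wordTwo x (y - 1), [false])) := by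
  obtain ⟨h1, h2, h3, h4, h5, h6⟩ := hp
  rcases wordTwo_decomp h1 h2 h4 with ⟨i, hi1, hix, hu, hv⟩ | ⟨j, hjy, hu, hv⟩
  · left
    rw [hu] at h5
    have hi : i = 1 := (isUlam_replicate i).mp h5
    subst hi
    rw [hv] at h6
    refine ⟨hix, h6, Prod.ext (by simp [hu]) hv⟩
  · right
    rw [hv] at h6
    have hj : y - j = 1 := (isUlam_replicate _).mp h6
    have hj' : j = y - 1 := by omega
    subst hj'
    rw [hu] at h5
    refine ⟨by omega, h5, Prod.ext hu (by simp [hv, hj])⟩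

lemma isUlam_wordTwo_rec (x y : ℕ) (h : 1 ≤ x + y) :
    IsUlam (wordTwo x y) ↔
      Xor' (1 ≤ x ∧ IsUlam (wordTwo (x - 1) y)) (1 ≤ y ∧ IsUlam (wordTwo x (y - 1))) := by
  rw [isUlam_wordTwo_iff x y h]
  constructor
  · rintro ⟨p, hp, huniq⟩
    rcases pred_classify hp with ⟨hx1, hU, hpe⟩ | ⟨hy1, hU, hpe⟩
    · left
      refine ⟨⟨hx1, hU⟩, ?_⟩
      rintro ⟨hy1, hB⟩
      have := (huniq _ (predB x y hy1 hB)).trans (huniq _ (predA x y hx1 hU)).symm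
      exact wordTwo_ne_singleton x (y - 1) (congrArg Prod.fst this)
    · right
      refine ⟨⟨hy1, hU⟩, ?_⟩
      rintro ⟨hx1, hA⟩
      have := (huniq _ (predA x y hx1 hA)).trans (huniq _ (predB x y hy1 hU)).symm
      exact wordTwo_ne_singleton x (y - 1) (congrArg Prod.fst this).symm
  · rintro (⟨⟨hx1, hU⟩, hnB⟩ | ⟨⟨hy1, hU⟩, hnA⟩)
    · refine ⟨_, predA x y hx1 hU, ?_⟩
      intro q hq
      rcases pred_classify hq with ⟨_, _, rfl⟩ | ⟨hy1, hB, _⟩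
      · rfl
      · exact absurd ⟨hy1, hB⟩ hnB
    · refine ⟨_, predB x y hy1 hU, ?_⟩
      intro q hq
      rcases pred_classify hq with ⟨hx1, hA, _⟩ | ⟨_, _, rfl⟩
      · exact absurd ⟨hx1, hA⟩ hnA
      · rfl

lemma land_two_mul (a b : ℕ) (p q : Bool) :
    (2 * a + p.toNat) &&& (2 * b + q.toNat) = 2 * (a &&& b) + (p && q).toNat := by
  cases p <;> cases q
  · simpa using Nat.land_bit false a false b
  · simpa using Nat.land_bit false a true b
  · simpa using Nat.land_bit true a false b
  · simpa using Nat.land_bit true a true b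

lemma land_rec : ∀ n x y : ℕ, x + y = n → 1 ≤ x + y →
    ((x &&& y = 0) ↔ Xor' (1 ≤ x ∧ (x - 1) &&& y = 0) (1 ≤ y ∧ x &&& (y - 1) = 0)) := by
  intro n
  induction n using Nat.strong_induction_on with
  | _ n ih =>
    intro x y hn h1
    have h00 : ∀ a b : ℕ, 2 * a &&& (2 * b) = 2 * (a &&& b) := by
      intro a b; simpa using land_two_mul a b false false
    have h10 : ∀ a b : ℕ, (2 * a + 1) &&& (2 * b) = 2 * (a &&& b) := by
      intro a b; simpa using land_two_mul a b true false
    have h01 : ∀ a b : ℕ, 2 * a &&& (2 * b + 1) = 2 * (a &&& b) := by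
      intro a b; simpa using land_two_mul a b false true
    have h11 : ∀ a b : ℕ, (2 * a + 1) &&& (2 * b + 1) = 2 * (a &&& b) + 1 := by
      intro a b; simpa using land_two_mul a b true true
    obtain ⟨a, p, hx, hp⟩ : ∃ a p, x = 2 * a + p ∧ p ≤ 1 := ⟨x / 2, x % 2, by omega, by omega⟩
    obtain ⟨b, q, hy, hq⟩ : ∃ b q, y = 2 * b + q ∧ q ≤ 1 := ⟨y / 2, y % 2, by omega, by omega⟩
    subst hx hy
    interval_cases p <;> interval_cases q <;> (try simp only [Nat.add_zero])
    · -- p = 0, q = 0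
      rcases Nat.eq_zero_or_pos a with rfl | ha
      · simp only [Nat.mul_zero, Nat.zero_sub, Nat.zero_and, Xor', xor_def, and_true, true_and,
          true_iff, iff_true]
        omega
      · rcases Nat.eq_zero_or_pos b with rfl | hb
        · simp only [Nat.mul_zero, Nat.zero_sub, Nat.and_zero, Xor', xor_def, and_true, true_and,
            true_iff, iff_true]
          omega
        · rw [h00, show 2 * a - 1 = 2 * (a - 1) + 1 from by omega,
            show 2 * b - 1 = 2 * (b - 1) + 1 from by omega, h10, h01]
          have IH := ih (a + b) (by omega) a b rfl (by omega)
          generalize a &&& b = s at IH ⊢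
          generalize (a - 1) &&& b = u at IH ⊢
          generalize a &&& (b - 1) = v at IH ⊢
          simp only [Xor', xor_def] at IH ⊢
          omega
    · -- p = 0, q = 1
      rcases Nat.eq_zero_or_pos a with rfl | ha
      · simp only [Nat.mul_zero, Nat.zero_sub, Nat.zero_and, Xor', xor_def, and_true, true_and,
          true_iff, iff_true]
        omega
      · rw [show 2 * b + 1 - 1 = 2 * b from by omega,
          show 2 * a - 1 = 2 * (a - 1) + 1 from by omega, h01, h00, h11]
        generalize a &&& b = s
        generalize (a - 1) &&& b = u
        simp only [Xor', xor_def]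
        omega
    · -- p = 1, q = 0
      rcases Nat.eq_zero_or_pos b with rfl | hb
      · simp only [Nat.mul_zero, Nat.zero_sub, Nat.and_zero, Xor', xor_def, and_true, true_and,
          true_iff, iff_true]
        omega
      · rw [show 2 * a + 1 - 1 = 2 * a from by omega,
          show 2 * b - 1 = 2 * (b - 1) + 1 from by omega, h10, h00, h11]
        generalize a &&& b = s
        generalize a &&& (b - 1) = v
        simp only [Xor', xor_def]
        omega
    · -- p = 1, q = 1
      rw [show 2 * a + 1 - 1 = 2 * a from by omega,
        show 2 * b + 1 - 1 = 2 * b from by omega, h11, h01, h10]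
      generalize a &&& b = s
      simp only [Xor', xor_def]
      omega

lemma isUlam_wordTwo : ∀ x y : ℕ, IsUlam (wordTwo x y) ↔ x &&& y = 0 := by
  have main : ∀ n x y : ℕ, x + y = n → (IsUlam (wordTwo x y) ↔ x &&& y = 0) := by
    intro n
    induction n using Nat.strong_induction_on with
    | _ n ih =>
      intro x y hn
      rcases Nat.eq_zero_or_pos n with rfl | hpos
      · have hx : x = 0 := by omega
        have hy : y = 0 := by omega
        subst hx hy
        exact iff_of_true (isUlam_of_length_one (by rw [wordTwo_length])) rfl
      · rw [isUlam_wordTwo_rec x y (by omega), land_rec n x y hn (by omega)]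
        have hA : (1 ≤ x ∧ IsUlam (wordTwo (x - 1) y)) ↔ (1 ≤ x ∧ (x - 1) &&& y = 0) :=
          and_congr_right fun hx => ih (x - 1 + y) (by omega) (x - 1) y rfl
        have hB : (1 ≤ y ∧ IsUlam (wordTwo x (y - 1))) ↔ (1 ≤ y ∧ x &&& (y - 1) = 0) :=
          and_congr_right fun hy => ih (x + (y - 1)) (by omega) x (y - 1) rfl
        rw [hA, hB]
  exact fun x y => main (x + y) x y rfl

lemma land_add_two_pow {x a n : ℕ} (ha : a < 2 ^ n) : (x + 2 ^ n) &&& a = x &&& a := by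
  apply Nat.eq_of_testBit_eq
  intro i
  rw [Nat.testBit_land, Nat.testBit_land]
  by_cases hi : i < n
  · congr 1
    have hmod : (x + 2 ^ n) % 2 ^ n = x % 2 ^ n := Nat.add_mod_right x (2 ^ n)
    have e1 : ((x + 2 ^ n) % 2 ^ n).testBit i = (x + 2 ^ n).testBit i := by
      rw [Nat.testBit_mod_two_pow]
      simp [hi]
    have e2 : (x % 2 ^ n).testBit i = x.testBit i := by
      rw [Nat.testBit_mod_two_pow]
      simp [hi]
    rw [← e1, ← e2, hmod]
  · have hai : a.testBit i = false :=
      Nat.testBit_lt_two_pow (lt_of_lt_of_le ha (Nat.pow_le_pow_right (by omega) (by omega)))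
    simp [hai]

end UlamAux

/-- `culam[y]` is biperiodic with biperiod `2^(k+1) × 2^(k+1)`. -/
theorem culam_biperiodic (k y : ℕ) (h1 : 2 ^ k ≤ y) (h2 : y < 2 ^ (k + 1)) (x z : ℕ) :
    culam y (x + 2 ^ (k + 1)) z = culam y x z ∧
    culam y x (z + 2 ^ (k + 1)) = culam y x z := by
  constructor
  · have hs : {a : ℕ | a ≤ y ∧ IsUlam (wordTwo (x + 2 ^ (k + 1)) a) ∧
        IsUlam (wordTwo (y - a) z)} =
        {a : ℕ | a ≤ y ∧ IsUlam (wordTwo x a) ∧ IsUlam (wordTwo (y - a) z)} := by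
      ext a
      simp only [Set.mem_setOf_eq]
      refine and_congr_right fun hay => and_congr_left fun _ => ?_
      rw [isUlam_wordTwo, isUlam_wordTwo, land_add_two_pow (lt_of_le_of_lt hay h2)]
    unfold culam
    rw [hs]
  · have hs : {a : ℕ | a ≤ y ∧ IsUlam (wordTwo x a) ∧
        IsUlam (wordTwo (y - a) (z + 2 ^ (k + 1)))} =
        {a : ℕ | a ≤ y ∧ IsUlam (wordTwo x a) ∧ IsUlam (wordTwo (y - a) z)} := by
      ext a
      simp only [Set.mem_setOf_eq]
      refine and_congr_right fun hay => and_congr_right fun _ => ?_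
      rw [isUlam_wordTwo, isUlam_wordTwo, Nat.land_comm,
        land_add_two_pow (lt_of_le_of_lt (Nat.sub_le y a) h2), Nat.land_comm]
    unfold culam
    rw [hs]
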